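/- Let K be a number field with [K : ℚ] = 4 and ring of integers 𝒪_K, and let ℓ be a rational prime that is unramified in K. Let α ∈ 𝒪_K, and let f ∈ ℤ[X] be the characteristic polynomial of the ℤ-linear map given by multiplication by α on 𝒪_K (a free ℤ-module of rank 4). If f(X) ≡ (X − 1)^4 (mod ℓ), meaning all coefficients of f − (X − 1)^4 are divisible by ℓ, then α ≡ 1 (mod ℓ𝒪_K), i.e. α − 1 ∈ ℓ𝒪_K. -/
import Mathlib


open NumberField Polynomial

/-- Let `K` be a quartic number field and `ℓ` a rational prime unramified in
`K` (i.e. `ℓ𝒪_K` is a radical ideal).  Let `α ∈ 𝒪_K` and let `f ∈ ℤ[X]` be the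
characteristic polynomial of multiplication by `α` on the free `ℤ`-module
`𝒪_K` of rank 4.  If `f ≡ (X - 1)^4 (mod ℓ)` coefficientwise, then
`α - 1 ∈ ℓ𝒪_K`. -/
theorem stmt_3 (K : Type*) [Field K] [NumberField K]
    (hK : Module.finrank ℚ K = 4)
    (ℓ : ℕ) (hℓ : ℓ.Prime)
    (hunram : (Ideal.span {(ℓ : 𝓞 K)} : Ideal (𝓞 K)).IsRadical)
    (α : 𝓞 K)
    (f : ℤ[X])
    (hf : f = LinearMap.charpoly (LinearMap.mul ℤ (𝓞 K) α))
    (hcong : ∀ i : ℕ, (ℓ : ℤ) ∣ (f - (X - 1) ^ 4).coeff i) :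
    α - 1 ∈ Ideal.span {(ℓ : 𝓞 K)} := by
  -- Cayley–Hamilton: f(α) = 0
  have hCH : Polynomial.aeval α f = 0 := by
    have h1 : Polynomial.aeval (LinearMap.mul ℤ (𝓞 K) α) f = 0 := by
      rw [hf]; exact LinearMap.aeval_self_charpoly _
    have h2 := Polynomial.aeval_algHom_apply (Algebra.lmul ℤ (𝓞 K)) α f
    rw [show (Algebra.lmul ℤ (𝓞 K)) α = (LinearMap.mul ℤ (𝓞 K)) α from rfl, h1] at h2
    have h3 := congrArg (fun g => g 1) h2
    simpa using h3.symm
  -- ℓ divides f - (X-1)^4 as a polynomial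
  obtain ⟨h, hh⟩ : (C (ℓ : ℤ)) ∣ (f - (X - 1) ^ 4) :=
    (Polynomial.C_dvd_iff_dvd_coeff _ _).2 hcong
  have key : (α - 1) ^ 4 = -((ℓ : 𝓞 K) * Polynomial.aeval α h) := by
    have := congrArg (Polynomial.aeval α) hh
    simp only [map_sub, map_pow, map_mul, aeval_C, aeval_X, map_one, hCH,
      zero_sub] at this
    have h3 : ((algebraMap ℤ (𝓞 K)) (ℓ : ℤ)) = (ℓ : 𝓞 K) := by
      simp
    rw [h3] at this
    linear_combination -this
  have hm : (α - 1) ^ 4 ∈ Ideal.span {(ℓ : 𝓞 K)} := by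
    rw [key]
    exact neg_mem (Ideal.mem_span_singleton.2 ⟨_, rfl⟩)
  exact hunram ⟨4, hm⟩
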